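/- Point-picking lemma: Let (X, d) be a complete metric space and A : X → [0, ∞) a continuous function that is bounded on bounded sets. Suppose x0 ∈ X satisfies A(x0) ≥ 1, and fix α > 0 with α/A(x0) ≤ 1/2. Then there exists p ∈ X with A(p) ≥ A(x0), d(p, x0) ≤ 1, and sup { A(q) : q ∈ X, d(q, p) ≤ α/A(p) } ≤ 2 A(p). -/

import Mathlib

/-!
If no point `p` works, then every admissible point has a neighbour at distance `≤ α / A p` where
`A` more than doubles. Starting from `x0` this yields points `p_k` with `A p_k ≥ 2 ^ k * A x0`
and `d(p_k, x0) ≤ 1 - 2 ^ (-k)`, since `α / A p_k ≤ 2 ^ (-(k + 1))`. So `A` is unbounded on the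
closed unit ball around `x0`, a contradiction.
-/

open Metric

lemma div_le_half_pow_succ {a b α : ℝ} (ha : 0 < a) (hα : α ≤ a / 2) (k : ℕ)
    (hb : 2 ^ k * a ≤ b) : α / b ≤ (1 / 2) ^ (k + 1) := by
  rw [div_le_iff₀ (lt_of_lt_of_le (by positivity) hb)]
  calc α ≤ a / 2 := hα
    _ = (1 / 2) ^ (k + 1) * (2 ^ k * a) := by rw [pow_succ, one_div_pow]; field_simp
    _ ≤ (1 / 2) ^ (k + 1) * b := by gcongr

lemma exists_pow_two_mul_le_of_forall_exists_double {X : Type*} [PseudoMetricSpace X]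
    {A : X → ℝ} {x0 : X} {α : ℝ} (hA0 : 0 < A x0) (hα : α ≤ A x0 / 2)
    (hstep : ∀ p, A x0 ≤ A p → dist p x0 ≤ 1 → ∃ q, dist q p ≤ α / A p ∧ 2 * A p < A q)
    (k : ℕ) : ∃ p, 2 ^ k * A x0 ≤ A p ∧ dist p x0 ≤ 1 - (1 / 2) ^ k := by
  induction k with
  | zero => exact ⟨x0, by simp, by simp⟩
  | succ k ih =>
    obtain ⟨p, hAp, hdp⟩ := ih
    have hAx0p : A x0 ≤ A p :=
      (le_mul_of_one_le_left hA0.le (one_le_pow₀ one_le_two)).trans hAp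
    obtain ⟨q, hdq, hAq⟩ := hstep p hAx0p (hdp.trans (sub_le_self _ (by positivity)))
    refine ⟨q, ?_, ?_⟩
    · rw [pow_succ', mul_assoc]
      linarith
    · calc dist q x0 ≤ dist q p + dist p x0 := dist_triangle q p x0
        _ ≤ (1 / 2) ^ (k + 1) + (1 - (1 / 2) ^ k) :=
          add_le_add (hdq.trans (div_le_half_pow_succ hA0 hα k hAp)) hdp
        _ = 1 - (1 / 2) ^ (k + 1) := by rw [pow_succ]; ring

theorem point_picking_general (X : Type*) [MetricSpace X]
    (A : X → ℝ)
    (hbdd : ∀ s : Set X, Bornology.IsBounded s → BddAbove (A '' s))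
    (x0 : X) (hA0 : 1 ≤ A x0) (α : ℝ) (hα2 : α / A x0 ≤ 1 / 2) :
    ∃ p : X, A x0 ≤ A p ∧ dist p x0 ≤ 1 ∧
      ∀ q : X, dist q p ≤ α / A p → A q ≤ 2 * A p := by
  by_contra! hstep
  have hA0pos : 0 < A x0 := one_pos.trans_le hA0
  have hα : α ≤ A x0 / 2 := by
    rw [div_le_iff₀ hA0pos] at hα2
    linarith
  obtain ⟨M, hM⟩ := hbdd (closedBall x0 1) isBounded_closedBall
  obtain ⟨k, hk⟩ := pow_unbounded_of_one_lt M one_lt_two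
  obtain ⟨p, hAp, hdp⟩ := exists_pow_two_mul_le_of_forall_exists_double hA0pos hα hstep k
  have hp : p ∈ closedBall x0 1 := hdp.trans (sub_le_self _ (by positivity))
  have hpow : 2 ^ k ≤ A p := (le_mul_of_one_le_right (by positivity) hA0).trans hAp
  linarith [hM ⟨p, hp, rfl⟩]

/-- Point-picking lemma: in a complete metric space `X`, given a continuous function
`A : X → [0,∞)` bounded on bounded sets, a point `x0` with `A(x0) ≥ 1`, and `α > 0`
with `α / A(x0) ≤ 1/2`, there is a point `p` with `A(p) ≥ A(x0)`, `d(p, x0) ≤ 1` and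
`A ≤ 2 A(p)` on the closed ball of radius `α / A(p)` around `p`. -/
theorem point_picking (X : Type*) [MetricSpace X] [CompleteSpace X]
    (A : X → ℝ) (hcont : Continuous A) (hnonneg : ∀ x, 0 ≤ A x)
    (hbdd : ∀ s : Set X, Bornology.IsBounded s → BddAbove (A '' s))
    (x0 : X) (hA0 : 1 ≤ A x0) (α : ℝ) (hα : 0 < α) (hα2 : α / A x0 ≤ 1 / 2) :
    ∃ p : X, A x0 ≤ A p ∧ dist p x0 ≤ 1 ∧
      ∀ q : X, dist q p ≤ α / A p → A q ≤ 2 * A p :=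
  point_picking_general X A hbdd x0 hA0 α hα2
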